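/- Let τ(φ) = t²·φ_tt + (1−n)·t·φ_t + t²·φ_xx with n = 1, acting on smooth functions on {t>0} × ℝ. For a positive integer p and 1 ≤ i ≤ 3, define f^i(t,p) = (t^{2i}/∏_{k=1}^{i} k) · ∑_{j=0}^{p−1} ∑_{ℓ_1+…+ℓ_i=j} ((−1)^{i+j}·2^{j−i}·∏_{k=1}^{j}(p−k)) / (∏_{k=1}^{i}(2k−1)^{ℓ_k+1}) · log(t)^{p−j−1}. Then φ_p(t,x) = x⁶·log(t)^{p−1} + 30x⁴·f¹(t,p) + 360x²·f²(t,p) + 720·f³(t,p) satisfies τ(φ_p) = −(p−1)·φ_{p−1} + (p−1)(p−2)·φ_{p−2}; consequently φ_p is p-harmonic, i.e. τ^p(φ_p) = 0. -/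

import Mathlib

/-- The Laplace–Beltrami operator of `ℝH²` (`n = 1`):
`τ(φ) = t²·φ_tt + (1−1)·t·φ_t + t²·φ_xx`. -/
noncomputable def tauRH2 (φ : ℝ → ℝ → ℝ) : ℝ → ℝ → ℝ := fun t x =>
  t ^ 2 * deriv (deriv (fun s => φ s x)) t
    + (1 - (1 : ℝ)) * t * deriv (fun s => φ s x) t
    + t ^ 2 * deriv (deriv (fun y => φ t y)) x

/-- The auxiliary function
`f^i(t,p) = (t^{2i}/i!) · ∑_{j=0}^{p−1} ∑_{ℓ_1+…+ℓ_i=j}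
  ((−1)^{i+j}·2^{j−i}·∏_{k=1}^{j}(p−k)) / (∏_{k=1}^{i}(2k−1)^{ℓ_k+1}) · log(t)^{p−j−1}`. -/
noncomputable def fRH2 (i : ℕ) (t : ℝ) (p : ℕ) : ℝ :=
  t ^ (2 * i) / (Nat.factorial i : ℝ) *
    ∑ j ∈ Finset.range p, ∑ ℓ ∈ Finset.Nat.antidiagonalTuple i j,
      (-1 : ℝ) ^ (i + j) * (2 : ℝ) ^ ((j : ℤ) - (i : ℤ))
        * (∏ k ∈ Finset.range j, ((p : ℝ) - (k + 1)))
        / (∏ k : Fin i, (2 * ((k : ℕ) + 1) - 1 : ℝ) ^ (ℓ k + 1))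
        * Real.log t ^ (p - j - 1)

/-- `φ_p(t,x) = x⁶·log(t)^{p−1} + 30x⁴·f¹(t,p) + 360x²·f²(t,p) + 720·f³(t,p)`. -/
noncomputable def phiRH2 (p : ℕ) : ℝ → ℝ → ℝ := fun t x =>
  x ^ 6 * Real.log t ^ (p - 1) + 30 * x ^ 4 * fRH2 1 t p + 360 * x ^ 2 * fRH2 2 t p
    + 720 * fRH2 3 t p



open Finset

/-- splitting the last coordinate of an antidiagonal tuple -/
lemma sum_adt_snoc {M : Type*} [AddCommMonoid M] (k j : ℕ) (f : (Fin (k+1) → ℕ) → M) :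
    ∑ x ∈ Finset.Nat.antidiagonalTuple (k+1) j, f x
      = ∑ ab ∈ Finset.HasAntidiagonal.antidiagonal j, ∑ x ∈ Finset.Nat.antidiagonalTuple k ab.1,
          f (Fin.snoc x ab.2) := by
  rw [Finset.sum_sigma' (Finset.HasAntidiagonal.antidiagonal j) (fun ab => Finset.Nat.antidiagonalTuple k ab.1)
    (fun ab x => f (Fin.snoc x ab.2))]
  refine Finset.sum_bij' (fun y _ => (⟨(∑ i : Fin k, y (Fin.castSucc i), y (Fin.last k)),
      Fin.init y⟩ : (ab : ℕ × ℕ) × (Fin k → ℕ)))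
    (fun a _ => Fin.snoc a.2 a.1.2) ?_ ?_ ?_ ?_ ?_
  · intro y hy
    rw [Finset.Nat.mem_antidiagonalTuple] at hy
    rw [Finset.mem_sigma]
    constructor
    · rw [Finset.HasAntidiagonal.mem_antidiagonal]
      simp only []
      rw [← hy, Fin.sum_univ_castSucc]
    · rw [Finset.Nat.mem_antidiagonalTuple]
      rfl
  · intro a ha
    rw [Finset.mem_sigma, Finset.HasAntidiagonal.mem_antidiagonal, Finset.Nat.mem_antidiagonalTuple] at ha
    rw [Finset.Nat.mem_antidiagonalTuple]
    rw [Fin.sum_univ_castSucc]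
    simp only [Fin.snoc_castSucc, Fin.snoc_last]
    rw [ha.2, ha.1]
  · intro y hy
    exact Fin.snoc_init_self y
  · intro a ha
    rw [Finset.mem_sigma, Finset.HasAntidiagonal.mem_antidiagonal, Finset.Nat.mem_antidiagonalTuple] at ha
    refine Sigma.ext ?_ (heq_of_eq ?_)
    · ext
      · simp only [Fin.snoc_castSucc]
        exact ha.2
      · simp [Fin.snoc_last]
    · simp [Fin.init_snoc]
  · intro y hy
    rw [Fin.snoc_init_self y]

noncomputable def bbRH2 (i j : ℕ) : ℝ :=
  ∑ ℓ ∈ Finset.Nat.antidiagonalTuple i j,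
    (∏ k : Fin i, (2 * ((k : ℕ) + 1) - 1 : ℝ) ^ (ℓ k + 1))⁻¹

lemma bb_zero_left (j : ℕ) : bbRH2 0 j = if j = 0 then 1 else 0 := by
  cases j with
  | zero => simp [bbRH2]
  | succ n => simp [bbRH2]

lemma bb_succ (k j : ℕ) :
    bbRH2 (k+1) j = ∑ m ∈ Finset.range (j+1),
      bbRH2 k m * ((2*(k:ℝ)+1)⁻¹) ^ (j - m + 1) := by
  rw [bbRH2, sum_adt_snoc, Finset.Nat.sum_antidiagonal_eq_sum_range_succ_mk]
  refine Finset.sum_congr rfl fun m hm => ?_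
  rw [bbRH2, Finset.sum_mul]
  refine Finset.sum_congr rfl fun x hx => ?_
  rw [Fin.prod_univ_castSucc]
  simp only [Fin.snoc_castSucc, Fin.snoc_last, Fin.coe_castSucc, Fin.val_last]
  rw [mul_inv, ← inv_pow]
  have : (2 * ((k:ℝ) + 1) - 1) = 2*(k:ℝ)+1 := by ring
  rw [this]

lemma base_pos (k : ℕ) : (0:ℝ) < 2*(k:ℝ)+1 := by positivity

lemma bb_prod_pos (i : ℕ) (ℓ : Fin i → ℕ) :
    (0:ℝ) < ∏ k : Fin i, (2 * ((k : ℕ) + 1) - 1 : ℝ) ^ (ℓ k + 1) := by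
  apply Finset.prod_pos
  intro k _
  apply pow_pos
  have : (0:ℝ) < 2*((k:ℕ):ℝ)+1 := base_pos _
  push_cast
  push_cast at this
  linarith

lemma bb_rec0 (k : ℕ) : (2*(k:ℝ)+1) * bbRH2 (k+1) 0 = bbRH2 k 0 := by
  rw [bbRH2, bbRH2, Finset.Nat.antidiagonalTuple_zero_right,
    Finset.Nat.antidiagonalTuple_zero_right, Finset.sum_singleton, Finset.sum_singleton]
  rw [Fin.prod_univ_castSucc]
  simp only [Pi.zero_apply, Fin.coe_castSucc, Fin.val_last]
  rw [mul_inv]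
  have h1 : ((2 * ((k:ℕ) + 1) - 1 : ℝ) ^ (0 + 1))⁻¹ = (2*(k:ℝ)+1)⁻¹ := by
    push_cast
    rw [pow_one]
    congr 1
    ring
  rw [h1, ← mul_assoc, mul_comm (2*(k:ℝ)+1), mul_assoc,
    mul_inv_cancel₀ (base_pos k).ne', mul_one]

lemma bb_recS (k j : ℕ) :
    (2*(k:ℝ)+1) * bbRH2 (k+1) (j+1) = bbRH2 k (j+1) + bbRH2 (k+1) j := by
  rw [bb_succ k (j+1), Finset.mul_sum, Finset.sum_range_succ]
  have h1 : ∀ m ∈ Finset.range (j+1),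
      (2*(k:ℝ)+1) * (bbRH2 k m * ((2*(k:ℝ)+1)⁻¹) ^ (j + 1 - m + 1))
        = bbRH2 k m * ((2*(k:ℝ)+1)⁻¹) ^ (j - m + 1) := by
    intro m hm
    rw [Finset.mem_range] at hm
    have he : j + 1 - m + 1 = (j - m + 1) + 1 := by omega
    rw [he, pow_succ]
    field_simp
  rw [Finset.sum_congr rfl h1, ← bb_succ]
  have : j + 1 - (j+1) + 1 = 1 := by omega
  rw [this]
  rw [pow_one, ← mul_assoc, mul_comm (2*(k:ℝ)+1) (bbRH2 k (j+1)), mul_assoc,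
    mul_inv_cancel₀ (base_pos k).ne', mul_one]
  ring


noncomputable def PRH2 (q : ℝ) (j : ℕ) : ℝ := ∏ k ∈ Finset.range j, (q - ((k:ℝ)+1))

noncomputable def ARH2 (i j : ℕ) (q : ℝ) : ℝ :=
  (-1:ℝ)^(i+j) * (2:ℝ)^((j:ℤ) - (i:ℤ)) * PRH2 q j * bbRH2 i j

lemma PR_zero (q : ℝ) : PRH2 q 0 = 1 := by rw [PRH2, Finset.prod_range_zero]

lemma PR_succ (q : ℝ) (j : ℕ) : PRH2 q (j+1) = PRH2 q j * (q - ((j:ℝ)+1)) := by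
  rw [PRH2, PRH2, Finset.prod_range_succ]

lemma PR_shift1 (q : ℝ) (j : ℕ) : PRH2 q (j+1) = (q-1) * PRH2 (q-1) j := by
  simp only [PRH2]
  rw [Finset.prod_range_succ']
  have h2 : (∏ k ∈ Finset.range j, (q - ((((k+1:ℕ)):ℝ) + 1)))
      = ∏ k ∈ Finset.range j, (q - 1 - ((k:ℝ)+1)) :=
    Finset.prod_congr rfl fun k _ => by push_cast; ring
  rw [h2]
  push_cast
  ring

lemma PR_shift2 (q : ℝ) (j : ℕ) : PRH2 q (j+2) = (q-1) * ((q-2) * PRH2 (q-2) j) := by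
  rw [PR_shift1 q (j+1), PR_shift1 (q-1) j]
  have : q - 1 - 1 = q - 2 := by ring
  rw [this]

lemma AR_zero (j : ℕ) (q : ℝ) : ARH2 0 j q = if j = 0 then 1 else 0 := by
  rw [ARH2, bb_zero_left]
  cases j with
  | zero => simp [PR_zero]
  | succ n => simp

lemma zpow2_shift (a : ℤ) (n : ℕ) : (2:ℝ)^(a + (n:ℤ)) = (2:ℝ)^(n:ℕ) * (2:ℝ)^a := by
  rw [zpow_add₀ (two_ne_zero : (2:ℝ) ≠ 0), zpow_natCast, mul_comm]

/-- core identity, `j ≥ 2` case -/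
lemma core2 (i j : ℕ) (q : ℝ) :
    (2*(i:ℝ))*(2*(i:ℝ)-1) * ARH2 i (j+2) q
      + (4*(i:ℝ)-1)*(q-((j:ℝ)+2)) * ARH2 i (j+1) q
      + (q-((j:ℝ)+2))*(q-((j:ℝ)+1)) * ARH2 i j q
      + (i:ℝ) * ARH2 (i-1) (j+2) q
      + (q-1) * ARH2 i (j+1) (q-1)
      - (q-1)*(q-2) * ARH2 i j (q-2) = 0 := by
  cases i with
  | zero =>
    simp only [AR_zero, CharP.cast_eq_zero]
    cases j with
    | zero => norm_num [ARH2, PR_zero, PR_succ, bb_zero_left]; ring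
    | succ m => norm_num [ARH2, bb_zero_left]
  | succ k =>
    have hQ1 : (q-1) * PRH2 (q-1) (j+1) = PRH2 q j * (q-((j:ℝ)+1)) * (q-((j:ℝ)+2)) := by
      rw [← PR_shift1 q (j+1), PR_succ q (j+1), PR_succ q j]
      push_cast
      ring
    have hQ2 : (q-1) * ((q-2) * PRH2 (q-2) j) = PRH2 q j * (q-((j:ℝ)+1)) * (q-((j:ℝ)+2)) := by
      rw [← PR_shift2 q j, PR_succ q (j+1), PR_succ q j]
      push_cast
      ring
    have hB : (2*(k:ℝ)+1) * bbRH2 (k+1) (j+2) = bbRH2 k (j+2) + bbRH2 (k+1) (j+1) :=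
      bb_recS k (j+1)
    simp only [ARH2, Nat.add_sub_cancel]
    push_cast
    have s2 : (-1:ℝ)^(k+1+(j+2)) = (-1:ℝ)^(k+1+j) := by
      rw [show k+1+(j+2) = (k+1+j)+2 from by omega, pow_add]
      norm_num
    have s1 : (-1:ℝ)^(k+1+(j+1)) = -(-1:ℝ)^(k+1+j) := by
      rw [show k+1+(j+1) = (k+1+j)+1 from by omega, pow_succ]
      norm_num
    have s3 : (-1:ℝ)^(k+(j+2)) = -(-1:ℝ)^(k+1+j) := by
      rw [show k+(j+2) = (k+1+j)+1 from by omega, pow_succ]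
      norm_num
    have w2 : (2:ℝ)^((j:ℤ)+2 - ((k:ℤ)+1)) = 4 * (2:ℝ)^((j:ℤ) - ((k:ℤ)+1)) := by
      rw [show (j:ℤ)+2 - ((k:ℤ)+1) = ((j:ℤ) - ((k:ℤ)+1)) + ((2:ℕ):ℤ) from by push_cast; ring,
        zpow2_shift]
      norm_num
    have w1 : (2:ℝ)^((j:ℤ)+1 - ((k:ℤ)+1)) = 2 * (2:ℝ)^((j:ℤ) - ((k:ℤ)+1)) := by
      rw [show (j:ℤ)+1 - ((k:ℤ)+1) = ((j:ℤ) - ((k:ℤ)+1)) + ((1:ℕ):ℤ) from by push_cast; ring,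
        zpow2_shift]
      norm_num
    have w3 : (2:ℝ)^((j:ℤ)+2 - (k:ℤ)) = 8 * (2:ℝ)^((j:ℤ) - ((k:ℤ)+1)) := by
      rw [show (j:ℤ)+2 - (k:ℤ) = ((j:ℤ) - ((k:ℤ)+1)) + ((3:ℕ):ℤ) from by push_cast; ring,
        zpow2_shift]
      norm_num
    rw [s2, s1, s3, w2, w1, w3, PR_succ q (j+1), PR_succ q j]
    push_cast
    linear_combination (-2 * (-1:ℝ)^(k+1+j) * (2:ℝ)^((j:ℤ) - ((k:ℤ)+1)) * bbRH2 (k+1) (j+1)) * hQ1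
      + (-(-1:ℝ)^(k+1+j) * (2:ℝ)^((j:ℤ) - ((k:ℤ)+1)) * bbRH2 (k+1) j) * hQ2
      + (8*((k:ℝ)+1) * (-1:ℝ)^(k+1+j) * (2:ℝ)^((j:ℤ) - ((k:ℤ)+1)) * PRH2 q j * (q-((j:ℝ)+1)) * (q-((j:ℝ)+2))) * hB

/-- core identity, `j = 1` case -/
lemma core1 (i : ℕ) (q : ℝ) :
    (2*(i:ℝ))*(2*(i:ℝ)-1) * ARH2 i 1 q + (4*(i:ℝ)-1)*(q-1) * ARH2 i 0 q
      + (i:ℝ) * ARH2 (i-1) 1 q + (q-1) * ARH2 i 0 (q-1) = 0 := by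
  cases i with
  | zero => simp [AR_zero]
  | succ k =>
    have hB : (2*(k:ℝ)+1) * bbRH2 (k+1) 1 = bbRH2 k 1 + bbRH2 (k+1) 0 := bb_recS k 0
    simp only [ARH2, Nat.add_sub_cancel]
    have hP1 : PRH2 q 1 = q - 1 := by
      rw [PR_succ q 0, PR_zero]
      norm_num
    have hP0 : PRH2 q 0 = 1 := PR_zero q
    have hP0' : PRH2 (q-1) 0 = 1 := PR_zero _
    have s1 : (-1:ℝ)^(k+1+1) = -(-1:ℝ)^(k+1) := by rw [pow_succ]; ring
    have s0 : (-1:ℝ)^(k+1+0) = (-1:ℝ)^(k+1) := by norm_num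
    have sC : (-1:ℝ)^(k+1) = (-1:ℝ)^(k+1) := rfl
    have w1 : (2:ℝ)^(((1:ℕ):ℤ) - ((k+1:ℕ):ℤ)) = 2 * (2:ℝ)^(((0:ℕ):ℤ) - ((k+1:ℕ):ℤ)) := by
      rw [show ((1:ℕ):ℤ) - ((k+1:ℕ):ℤ) = (((0:ℕ):ℤ) - ((k+1:ℕ):ℤ)) + ((1:ℕ):ℤ) from by
        push_cast; ring, zpow2_shift]
      norm_num
    have w3 : (2:ℝ)^(((1:ℕ):ℤ) - ((k:ℕ):ℤ)) = 4 * (2:ℝ)^(((0:ℕ):ℤ) - ((k+1:ℕ):ℤ)) := by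
      rw [show ((1:ℕ):ℤ) - ((k:ℕ):ℤ) = (((0:ℕ):ℤ) - ((k+1:ℕ):ℤ)) + ((2:ℕ):ℤ) from by
        push_cast; ring, zpow2_shift]
      norm_num
    have sK : (-1:ℝ)^(k+1) = -(-1:ℝ)^k := by rw [pow_succ]; ring
    rw [hP1, hP0, hP0', s1, s0, w1, w3, sK]
    push_cast
    linear_combination (-4*((k:ℝ)+1) * (-(-1:ℝ)^k) * (2:ℝ)^((0:ℤ) - ((k:ℤ)+1)) * (q-1)) * hB

/-- core identity, `j = 0` case -/
lemma core0 (i : ℕ) (q : ℝ) :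
    (2*(i:ℝ))*(2*(i:ℝ)-1) * ARH2 i 0 q + (i:ℝ) * ARH2 (i-1) 0 q = 0 := by
  cases i with
  | zero => simp [AR_zero]
  | succ k =>
    have hB : (2*(k:ℝ)+1) * bbRH2 (k+1) 0 = bbRH2 k 0 := bb_rec0 k
    simp only [ARH2, Nat.add_sub_cancel]
    have hP0 : PRH2 q 0 = 1 := PR_zero q
    have s0 : (-1:ℝ)^(k+1+0) = (-1:ℝ)^(k+1) := by norm_num
    have sK : (-1:ℝ)^(k+0) = -(-1:ℝ)^(k+1) := by
      rw [pow_succ]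
      ring
    have w3 : (2:ℝ)^(((0:ℕ):ℤ) - ((k:ℕ):ℤ)) = 2 * (2:ℝ)^(((0:ℕ):ℤ) - ((k+1:ℕ):ℤ)) := by
      rw [show ((0:ℕ):ℤ) - ((k:ℕ):ℤ) = (((0:ℕ):ℤ) - ((k+1:ℕ):ℤ)) + ((1:ℕ):ℤ) from by
        push_cast; ring, zpow2_shift]
      norm_num
    rw [hP0, s0, sK, w3]
    push_cast
    linear_combination (2*((k:ℝ)+1) * (-1:ℝ)^(k+1) * (2:ℝ)^((0:ℤ) - ((k:ℤ)+1))) * hB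

noncomputable def SerRH2 (N : ℤ) (p : ℕ) (c : ℕ → ℝ) (t : ℝ) : ℝ :=
  ∑ j ∈ Finset.range p, c j * (t ^ N * Real.log t ^ (p - 1 - j))

noncomputable def dcoefRH2 (N : ℤ) (p : ℕ) (c : ℕ → ℝ) : ℕ → ℝ :=
  fun j => (N : ℝ) * c j + (if j = 0 then 0 else ((p:ℝ) - (j:ℝ)) * c (j-1))

noncomputable def cARH2 (i p : ℕ) : ℕ → ℝ := fun j => ARH2 i j (p:ℝ) / (Nat.factorial i : ℝ)

lemma hasDerivAt_monoRH2 (N : ℤ) (m : ℕ) {t : ℝ} (ht : 0 < t) :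
    HasDerivAt (fun s : ℝ => s ^ N * Real.log s ^ m)
      ((N:ℝ) * t^(N-1) * Real.log t ^ m + (m:ℝ) * t^(N-1) * Real.log t ^ (m-1)) t := by
  have h1 : HasDerivAt (fun s : ℝ => s ^ N) ((N:ℝ) * t^(N-1)) t :=
    hasDerivAt_zpow N t (Or.inl ht.ne')
  have h2 : HasDerivAt (fun s : ℝ => Real.log s ^ m)
      ((m:ℝ) * Real.log t ^ (m-1) * t⁻¹) t := by
    simpa using (Real.hasDerivAt_log ht.ne').fun_pow m
  have h3 := h1.fun_mul h2
  refine h3.congr_deriv ?_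
  rw [zpow_sub_one₀ ht.ne']
  ring

lemma shiftSumRH2 (p : ℕ) (c : ℕ → ℝ) (T X : ℝ) :
    ∑ j ∈ Finset.range p, c j * (((p-1-j : ℕ):ℝ) * T * X ^ (p-1-j-1))
      = ∑ j ∈ Finset.range p, (if j = 0 then 0 else ((p:ℝ) - (j:ℝ)) * c (j-1)) * (T * X ^ (p-1-j)) := by
  cases p with
  | zero => simp
  | succ m =>
    rw [Finset.sum_range_succ, Finset.sum_range_succ']
    have hlast : c m * (((m+1-1-m : ℕ):ℝ) * T * X ^ (m+1-1-m-1)) = 0 := by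
      simp
    have hfirst : (if (0:ℕ) = 0 then (0:ℝ) else (((m+1:ℕ):ℝ) - ((0:ℕ):ℝ)) * c (0-1))
        * (T * X ^ (m+1-1-0)) = 0 := by
      simp
    rw [hlast, hfirst, add_zero, add_zero]
    refine Finset.sum_congr rfl fun j hj => ?_
    rw [Finset.mem_range] at hj
    have h1 : (j+1 : ℕ) ≠ 0 := by omega
    rw [if_neg h1]
    have h2 : ((m+1-1-j : ℕ):ℝ) = ((m+1:ℕ):ℝ) - ((j+1:ℕ):ℝ) := by
      have h3 : m+1-1-j = m - j := by omega
      rw [h3, Nat.cast_sub hj.le]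
      push_cast
      ring
    have h4 : m+1-1-j-1 = m+1-1-(j+1) := by omega
    rw [h2, h4]
    push_cast
    ring

lemma Ser_hasDerivAt (N : ℤ) (p : ℕ) (c : ℕ → ℝ) {t : ℝ} (ht : 0 < t) :
    HasDerivAt (fun s => SerRH2 N p c s) (SerRH2 (N-1) p (dcoefRH2 N p c) t) t := by
  have H : ∀ j ∈ Finset.range p,
      HasDerivAt (fun s => c j * (s ^ N * Real.log s ^ (p-1-j)))
        (c j * ((N:ℝ) * t^(N-1) * Real.log t ^ (p-1-j)
          + ((p-1-j:ℕ):ℝ) * t^(N-1) * Real.log t ^ (p-1-j-1))) t :=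
    fun j _ => (hasDerivAt_monoRH2 N (p-1-j) ht).const_mul (c j)
  have h := HasDerivAt.fun_sum H
  have he : SerRH2 (N-1) p (dcoefRH2 N p c) t
      = ∑ j ∈ Finset.range p, c j * ((N:ℝ) * t^(N-1) * Real.log t ^ (p-1-j)
          + ((p-1-j:ℕ):ℝ) * t^(N-1) * Real.log t ^ (p-1-j-1)) := by
    rw [SerRH2]
    have hsplit : ∀ j ∈ Finset.range p, c j * ((N:ℝ) * t^(N-1) * Real.log t ^ (p-1-j)
          + ((p-1-j:ℕ):ℝ) * t^(N-1) * Real.log t ^ (p-1-j-1))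
        = ((N:ℝ) * c j) * (t^(N-1) * Real.log t ^ (p-1-j))
          + c j * (((p-1-j:ℕ):ℝ) * (t^(N-1)) * Real.log t ^ (p-1-j-1)) := by
      intro j _
      ring
    rw [Finset.sum_congr rfl hsplit, Finset.sum_add_distrib]
    rw [shiftSumRH2 p c (t^(N-1)) (Real.log t)]
    rw [← Finset.sum_add_distrib]
    refine Finset.sum_congr rfl fun j hj => ?_
    rw [dcoefRH2]
    ring
  rw [he]
  exact h

lemma phiRH2_eq_Ser (i : ℕ) (t : ℝ) (p : ℕ) :
    fRH2 i t p = SerRH2 (2*i : ℕ) p (cARH2 i p) t := by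
  rw [fRH2, SerRH2]
  have hin : ∀ j ∈ Finset.range p,
      (∑ ℓ ∈ Finset.Nat.antidiagonalTuple i j,
        (-1 : ℝ) ^ (i + j) * (2 : ℝ) ^ ((j : ℤ) - (i : ℤ))
          * (∏ k ∈ Finset.range j, ((p : ℝ) - (k + 1)))
          / (∏ k : Fin i, (2 * ((k : ℕ) + 1) - 1 : ℝ) ^ (ℓ k + 1))
          * Real.log t ^ (p - j - 1))
      = ARH2 i j (p:ℝ) * Real.log t ^ (p - 1 - j) := by
    intro j _
    rw [← Finset.sum_mul, ARH2]
    have hexp : p - j - 1 = p - 1 - j := by omega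
    rw [hexp]
    congr 1
    rw [PRH2]
    simp only [div_eq_mul_inv]
    rw [← Finset.mul_sum, bbRH2]
  rw [Finset.sum_congr rfl hin, Finset.mul_sum]
  refine Finset.sum_congr rfl fun j hj => ?_
  rw [cARH2]
  rw [zpow_natCast]
  have : (Nat.factorial i : ℝ) ≠ 0 := Nat.cast_ne_zero.mpr (Nat.factorial_ne_zero i)
  field_simp

lemma log_eq_Ser (p : ℕ) (hp : 1 ≤ p) (t : ℝ) :
    Real.log t ^ (p-1) = SerRH2 ((2*0:ℕ):ℤ) p (cARH2 0 p) t := by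
  rw [SerRH2]
  have h1 : ∀ j ∈ Finset.range p, cARH2 0 p j * (t ^ ((2*0:ℕ):ℤ) * Real.log t ^ (p-1-j))
      = if j = 0 then Real.log t ^ (p-1-j) else 0 := by
    intro j _
    rw [cARH2, AR_zero]
    cases j with
    | zero => norm_num
    | succ n => norm_num
  rw [Finset.sum_congr rfl h1, Finset.sum_ite_eq' (Finset.range p) 0 (fun j => Real.log t ^ (p-1-j))]
  rw [if_pos (Finset.mem_range.mpr (by omega : (0:ℕ) < p))]
  rw [Nat.sub_zero]

lemma slice_rep (p : ℕ) (hp : 1 ≤ p) (t x : ℝ) :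
    phiRH2 p t x = x^6 * SerRH2 ((2*0:ℕ):ℤ) p (cARH2 0 p) t
      + 30*x^4 * SerRH2 ((2*1:ℕ):ℤ) p (cARH2 1 p) t
      + 360*x^2 * SerRH2 ((2*2:ℕ):ℤ) p (cARH2 2 p) t
      + 720 * SerRH2 ((2*3:ℕ):ℤ) p (cARH2 3 p) t := by
  rw [phiRH2, ← phiRH2_eq_Ser 1, ← phiRH2_eq_Ser 2, ← phiRH2_eq_Ser 3, log_eq_Ser p hp]

noncomputable def phiD1RH2 (p : ℕ) (x : ℝ) : ℝ → ℝ := fun t =>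
  x^6 * SerRH2 (((2*0:ℕ):ℤ)-1) p (dcoefRH2 ((2*0:ℕ):ℤ) p (cARH2 0 p)) t
    + 30*x^4 * SerRH2 (((2*1:ℕ):ℤ)-1) p (dcoefRH2 ((2*1:ℕ):ℤ) p (cARH2 1 p)) t
    + 360*x^2 * SerRH2 (((2*2:ℕ):ℤ)-1) p (dcoefRH2 ((2*2:ℕ):ℤ) p (cARH2 2 p)) t
    + 720 * SerRH2 (((2*3:ℕ):ℤ)-1) p (dcoefRH2 ((2*3:ℕ):ℤ) p (cARH2 3 p)) t

noncomputable def phiD2RH2 (p : ℕ) (x : ℝ) : ℝ → ℝ := fun t =>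
  x^6 * SerRH2 ((((2*0:ℕ):ℤ)-1)-1) p (dcoefRH2 (((2*0:ℕ):ℤ)-1) p (dcoefRH2 ((2*0:ℕ):ℤ) p (cARH2 0 p))) t
    + 30*x^4 * SerRH2 ((((2*1:ℕ):ℤ)-1)-1) p (dcoefRH2 (((2*1:ℕ):ℤ)-1) p (dcoefRH2 ((2*1:ℕ):ℤ) p (cARH2 1 p))) t
    + 360*x^2 * SerRH2 ((((2*2:ℕ):ℤ)-1)-1) p (dcoefRH2 (((2*2:ℕ):ℤ)-1) p (dcoefRH2 ((2*2:ℕ):ℤ) p (cARH2 2 p))) t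
    + 720 * SerRH2 ((((2*3:ℕ):ℤ)-1)-1) p (dcoefRH2 (((2*3:ℕ):ℤ)-1) p (dcoefRH2 ((2*3:ℕ):ℤ) p (cARH2 3 p))) t

lemma phi_hasD1 (p : ℕ) (hp : 1 ≤ p) (x : ℝ) {t : ℝ} (ht : 0 < t) :
    HasDerivAt (fun s => phiRH2 p s x) (phiD1RH2 p x t) t := by
  have h := ((((Ser_hasDerivAt ((2*0:ℕ):ℤ) p (cARH2 0 p) ht).const_mul (x^6)).add
    ((Ser_hasDerivAt ((2*1:ℕ):ℤ) p (cARH2 1 p) ht).const_mul (30*x^4))).add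
    ((Ser_hasDerivAt ((2*2:ℕ):ℤ) p (cARH2 2 p) ht).const_mul (360*x^2))).add
    ((Ser_hasDerivAt ((2*3:ℕ):ℤ) p (cARH2 3 p) ht).const_mul 720)
  have hfun : (fun s => phiRH2 p s x) = (fun s =>
      x^6 * SerRH2 ((2*0:ℕ):ℤ) p (cARH2 0 p) s
      + 30*x^4 * SerRH2 ((2*1:ℕ):ℤ) p (cARH2 1 p) s
      + 360*x^2 * SerRH2 ((2*2:ℕ):ℤ) p (cARH2 2 p) s
      + 720 * SerRH2 ((2*3:ℕ):ℤ) p (cARH2 3 p) s) :=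
    funext fun s => slice_rep p hp s x
  rw [hfun, phiD1RH2]
  exact h

lemma phi_hasD2 (p : ℕ) (x : ℝ) {t : ℝ} (ht : 0 < t) :
    HasDerivAt (phiD1RH2 p x) (phiD2RH2 p x t) t := by
  have h := ((((Ser_hasDerivAt (((2*0:ℕ):ℤ)-1) p (dcoefRH2 ((2*0:ℕ):ℤ) p (cARH2 0 p)) ht).const_mul (x^6)).add
    ((Ser_hasDerivAt (((2*1:ℕ):ℤ)-1) p (dcoefRH2 ((2*1:ℕ):ℤ) p (cARH2 1 p)) ht).const_mul (30*x^4))).add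
    ((Ser_hasDerivAt (((2*2:ℕ):ℤ)-1) p (dcoefRH2 ((2*2:ℕ):ℤ) p (cARH2 2 p)) ht).const_mul (360*x^2))).add
    ((Ser_hasDerivAt (((2*3:ℕ):ℤ)-1) p (dcoefRH2 ((2*3:ℕ):ℤ) p (cARH2 3 p)) ht).const_mul 720)
  exact h

lemma phi_tt (p : ℕ) (hp : 1 ≤ p) (x : ℝ) {t : ℝ} (ht : 0 < t) :
    deriv (deriv (fun s => phiRH2 p s x)) t = phiD2RH2 p x t := by
  have hev : deriv (fun s => phiRH2 p s x) =ᶠ[nhds t] phiD1RH2 p x := by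
    filter_upwards [IsOpen.mem_nhds isOpen_Ioi ht] with s hs
    exact (phi_hasD1 p hp x hs).deriv
  rw [hev.deriv_eq]
  exact (phi_hasD2 p x ht).deriv

lemma phi_xx (p : ℕ) (t x : ℝ) :
    deriv (deriv (fun y => phiRH2 p t y)) x
      = 30*x^4 * Real.log t^(p-1) + 360*x^2 * fRH2 1 t p + 720 * fRH2 2 t p := by
  have hd : ∀ y : ℝ, HasDerivAt (fun y => phiRH2 p t y)
      (6*y^5 * Real.log t^(p-1) + 120*y^3 * fRH2 1 t p + 720*y * fRH2 2 t p) y := by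
    intro y
    have h1 := (hasDerivAt_pow 6 y).mul_const (Real.log t ^ (p-1))
    have h2 := ((hasDerivAt_pow 4 y).const_mul (30:ℝ)).mul_const (fRH2 1 t p)
    have h3 := ((hasDerivAt_pow 2 y).const_mul (360:ℝ)).mul_const (fRH2 2 t p)
    have h4 : HasDerivAt (fun _ : ℝ => 720 * fRH2 3 t p) 0 y := hasDerivAt_const y _
    have h := ((h1.fun_add h2).fun_add h3).fun_add h4
    simp only [phiRH2]
    refine h.congr_deriv ?_
    push_cast
    ring
  have hd2 : HasDerivAt (fun y : ℝ =>
      6*y^5 * Real.log t^(p-1) + 120*y^3 * fRH2 1 t p + 720*y * fRH2 2 t p)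
      (30*x^4 * Real.log t^(p-1) + 360*x^2 * fRH2 1 t p + 720 * fRH2 2 t p) x := by
    have h1 := ((hasDerivAt_pow 5 x).const_mul (6:ℝ)).mul_const (Real.log t ^ (p-1))
    have h2 := ((hasDerivAt_pow 3 x).const_mul (120:ℝ)).mul_const (fRH2 1 t p)
    have h3 := ((hasDerivAt_pow 1 x).const_mul (720:ℝ)).mul_const (fRH2 2 t p)
    have h := (h1.fun_add h2).fun_add h3
    have hfun : (fun y : ℝ => 6*y^5 * Real.log t^(p-1) + 120*y^3 * fRH2 1 t p
        + 720*y^1 * fRH2 2 t p) = (fun y : ℝ => 6*y^5 * Real.log t^(p-1)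
        + 120*y^3 * fRH2 1 t p + 720*y * fRH2 2 t p) := by
      funext y
      ring
    rw [hfun] at h
    refine h.congr_deriv ?_
    push_cast
    ring
  have he : deriv (fun y => phiRH2 p t y) = (fun y : ℝ =>
      6*y^5 * Real.log t^(p-1) + 120*y^3 * fRH2 1 t p + 720*y * fRH2 2 t p) :=
    funext fun y => (hd y).deriv
  rw [he]
  exact hd2.deriv

lemma t2_Ser (N : ℤ) (p : ℕ) (c : ℕ → ℝ) {t : ℝ} (ht : t ≠ 0) :
    t^2 * SerRH2 N p c t = SerRH2 (N+2) p c t := by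
  rw [SerRH2, SerRH2, Finset.mul_sum]
  refine Finset.sum_congr rfl fun j _ => ?_
  rw [zpow_add₀ ht N 2, zpow_two]
  ring

lemma Ser_congr {p : ℕ} {c c' : ℕ → ℝ} (N : ℤ) (t : ℝ)
    (h : ∀ j ∈ Finset.range p, c j = c' j) :
    SerRH2 N p c t = SerRH2 N p c' t := by
  rw [SerRH2, SerRH2]
  exact Finset.sum_congr rfl fun j hj => by rw [h j hj]

lemma Ser_smul (a : ℝ) (N : ℤ) (p : ℕ) (c : ℕ → ℝ) (t : ℝ) :
    a * SerRH2 N p c t = SerRH2 N p (fun j => a * c j) t := by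
  rw [SerRH2, SerRH2, Finset.mul_sum]
  exact Finset.sum_congr rfl fun j _ => by ring

lemma Ser_pred (N : ℤ) (p : ℕ) (hp : 1 ≤ p) (c : ℕ → ℝ) (t : ℝ) :
    SerRH2 N (p-1) c t = SerRH2 N p (fun j => if j = 0 then 0 else c (j-1)) t := by
  obtain ⟨m, rfl⟩ : ∃ m, p = m+1 := ⟨p-1, by omega⟩
  rw [SerRH2, SerRH2, Finset.sum_range_succ']
  norm_num
  refine Finset.sum_congr rfl fun j hj => ?_
  have h9 : m - (j+1) = m - 1 - j := by omega
  rw [h9]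

lemma Ser_pred2 (N : ℤ) (p : ℕ) (hp : 1 ≤ p) (c : ℕ → ℝ) (t : ℝ) :
    SerRH2 N (p-2) c t = SerRH2 N p (fun j => if j ≤ 1 then 0 else c (j-2)) t := by
  rcases Nat.lt_or_ge p 2 with h2 | h2
  · have hp1 : p = 1 := by omega
    subst hp1
    simp [SerRH2]
  · have e1 : p - 2 = (p-1) - 1 := by omega
    rw [e1, Ser_pred N (p-1) (by omega) c t, Ser_pred N p hp _ t]
    refine Ser_congr N t fun j _ => ?_
    match j with
    | 0 => simp
    | 1 => simp
    | (n+2) => simp [Nat.succ_sub_one]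

lemma cast_pred (p : ℕ) (hp : 1 ≤ p) : ((p-1:ℕ):ℝ) = (p:ℝ)-1 := by
  have : p - 1 + 1 = p := by omega
  push_cast [Nat.cast_sub hp]
  ring

lemma cast_pred2 (p : ℕ) (hp : 2 ≤ p) : ((p-2:ℕ):ℝ) = (p:ℝ)-2 := by
  push_cast [Nat.cast_sub hp]
  ring

lemma KeyAll (i : ℕ) (p : ℕ) (hp : 1 ≤ p) (t : ℝ) :
    SerRH2 ((((2*i:ℕ):ℤ)-1-1)+2) p
        (dcoefRH2 (((2*i:ℕ):ℤ)-1) p (dcoefRH2 ((2*i:ℕ):ℤ) p (cARH2 i p))) t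
      + (i:ℝ) * SerRH2 ((2*i:ℕ):ℤ) p (fun j => ARH2 (i-1) j (p:ℝ) / (Nat.factorial i : ℝ)) t
    = -((p:ℝ)-1) * SerRH2 ((2*i:ℕ):ℤ) (p-1) (cARH2 i (p-1)) t
      + ((p:ℝ)-1) * ((p:ℝ)-2) * SerRH2 ((2*i:ℕ):ℤ) (p-2) (cARH2 i (p-2)) t := by
  have hN : (((2*i:ℕ):ℤ)-1-1)+2 = ((2*i:ℕ):ℤ) := by ring
  rw [hN, Ser_pred _ p hp _ t, Ser_pred2 _ p hp _ t, Ser_smul, Ser_smul, Ser_smul]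
  rw [SerRH2, SerRH2, SerRH2, SerRH2, ← Finset.sum_add_distrib, ← Finset.sum_add_distrib]
  refine Finset.sum_congr rfl fun j hj => ?_
  rw [Finset.mem_range] at hj
  have hfac : (Nat.factorial i : ℝ) ≠ 0 := Nat.cast_ne_zero.mpr (Nat.factorial_ne_zero i)
  rw [← add_mul, ← add_mul]
  congr 1
  match j with
  | 0 =>
    have hc := core0 i (p:ℝ)
    simp only [dcoefRH2, cARH2, if_pos rfl, Nat.le_zero]
    norm_num
    push_cast
    linear_combination (Nat.factorial i : ℝ)⁻¹ * hc
  | 1 =>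
    have hc := core1 i (p:ℝ)
    have hp2 : 2 ≤ p := by omega
    simp only [dcoefRH2, cARH2]
    norm_num
    rw [cast_pred p hp]
    push_cast
    linear_combination (Nat.factorial i : ℝ)⁻¹ * hc
  | (n+2) =>
    have hc := core2 i n (p:ℝ)
    have hp2 : 2 ≤ p := by omega
    simp only [dcoefRH2, cARH2]
    norm_num
    rw [cast_pred p hp, cast_pred2 p hp2]
    rw [if_neg (by omega : ¬ n + 2 ≤ 1)]
    push_cast
    linear_combination (Nat.factorial i : ℝ)⁻¹ * hc

lemma part1 (p : ℕ) (hp : 1 ≤ p) : ∀ t > (0:ℝ), ∀ x : ℝ,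
    tauRH2 (phiRH2 p) t x
      = -((p : ℝ) - 1) * phiRH2 (p - 1) t x
        + ((p : ℝ) - 1) * ((p : ℝ) - 2) * phiRH2 (p - 2) t x := by
  intro t ht x
  rw [tauRH2]
  rw [phi_tt p hp x ht, phi_xx p t x]
  have h1 : t^2 * phiD2RH2 p x t
      = x^6 * SerRH2 ((((2*0:ℕ):ℤ)-1-1)+2) p
          (dcoefRH2 (((2*0:ℕ):ℤ)-1) p (dcoefRH2 ((2*0:ℕ):ℤ) p (cARH2 0 p))) t
        + 30*x^4 * SerRH2 ((((2*1:ℕ):ℤ)-1-1)+2) p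
          (dcoefRH2 (((2*1:ℕ):ℤ)-1) p (dcoefRH2 ((2*1:ℕ):ℤ) p (cARH2 1 p))) t
        + 360*x^2 * SerRH2 ((((2*2:ℕ):ℤ)-1-1)+2) p
          (dcoefRH2 (((2*2:ℕ):ℤ)-1) p (dcoefRH2 ((2*2:ℕ):ℤ) p (cARH2 2 p))) t
        + 720 * SerRH2 ((((2*3:ℕ):ℤ)-1-1)+2) p
          (dcoefRH2 (((2*3:ℕ):ℤ)-1) p (dcoefRH2 ((2*3:ℕ):ℤ) p (cARH2 3 p))) t := by
    rw [phiD2RH2]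
    rw [← t2_Ser _ p _ ht.ne', ← t2_Ser _ p _ ht.ne', ← t2_Ser _ p _ ht.ne',
      ← t2_Ser _ p _ ht.ne']
    ring
  have hx1 : t^2 * SerRH2 ((2*0:ℕ):ℤ) p (cARH2 0 p) t
      = ((1:ℕ):ℝ) * SerRH2 ((2*1:ℕ):ℤ) p (fun j => ARH2 0 j (p:ℝ) / (Nat.factorial 1 : ℝ)) t := by
    rw [t2_Ser _ p _ ht.ne', Ser_smul]
    rw [show ((2*0:ℕ):ℤ)+2 = ((2*1:ℕ):ℤ) from by norm_num]
    refine Ser_congr _ _ fun j _ => ?_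
    rw [cARH2]
    norm_num [Nat.factorial]
  have hx2 : t^2 * SerRH2 ((2*1:ℕ):ℤ) p (cARH2 1 p) t
      = ((2:ℕ):ℝ) * SerRH2 ((2*2:ℕ):ℤ) p (fun j => ARH2 1 j (p:ℝ) / (Nat.factorial 2 : ℝ)) t := by
    rw [t2_Ser _ p _ ht.ne', Ser_smul]
    rw [show ((2*1:ℕ):ℤ)+2 = ((2*2:ℕ):ℤ) from by norm_num]
    refine Ser_congr _ _ fun j _ => ?_
    rw [cARH2]
    norm_num [Nat.factorial]
    ring
  have hx3 : t^2 * SerRH2 ((2*2:ℕ):ℤ) p (cARH2 2 p) t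
      = ((3:ℕ):ℝ) * SerRH2 ((2*3:ℕ):ℤ) p (fun j => ARH2 2 j (p:ℝ) / (Nat.factorial 3 : ℝ)) t := by
    rw [t2_Ser _ p _ ht.ne', Ser_smul]
    rw [show ((2*2:ℕ):ℤ)+2 = ((2*3:ℕ):ℤ) from by norm_num]
    refine Ser_congr _ _ fun j _ => ?_
    rw [cARH2]
    norm_num [Nat.factorial]
    ring
  have hphi1 : ((p:ℝ)-1) * phiRH2 (p-1) t x
      = ((p:ℝ)-1) * (x^6 * SerRH2 ((2*0:ℕ):ℤ) (p-1) (cARH2 0 (p-1)) t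
        + 30*x^4 * SerRH2 ((2*1:ℕ):ℤ) (p-1) (cARH2 1 (p-1)) t
        + 360*x^2 * SerRH2 ((2*2:ℕ):ℤ) (p-1) (cARH2 2 (p-1)) t
        + 720 * SerRH2 ((2*3:ℕ):ℤ) (p-1) (cARH2 3 (p-1)) t) := by
    rcases Nat.lt_or_ge p 2 with h2 | h2
    · have hp1 : p = 1 := by omega
      subst hp1
      norm_num
    · congr 1
      exact slice_rep (p-1) (by omega) t x
  have hphi2 : ((p:ℝ)-1) * ((p:ℝ)-2) * phiRH2 (p-2) t x
      = ((p:ℝ)-1) * ((p:ℝ)-2) * (x^6 * SerRH2 ((2*0:ℕ):ℤ) (p-2) (cARH2 0 (p-2)) t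
        + 30*x^4 * SerRH2 ((2*1:ℕ):ℤ) (p-2) (cARH2 1 (p-2)) t
        + 360*x^2 * SerRH2 ((2*2:ℕ):ℤ) (p-2) (cARH2 2 (p-2)) t
        + 720 * SerRH2 ((2*3:ℕ):ℤ) (p-2) (cARH2 3 (p-2)) t) := by
    rcases Nat.lt_or_ge p 3 with h2 | h2
    · rcases Nat.lt_or_ge p 2 with h1 | h1
      · have hp1 : p = 1 := by omega
        subst hp1
        norm_num
      · have hp2 : p = 2 := by omega
        subst hp2
        norm_num
    · congr 1
      exact slice_rep (p-2) (by omega) t x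
  rw [log_eq_Ser p hp, phiRH2_eq_Ser 1 t p, phiRH2_eq_Ser 2 t p, h1]
  have K0 := KeyAll 0 p hp t
  have K1 := KeyAll 1 p hp t
  have K2 := KeyAll 2 p hp t
  have K3 := KeyAll 3 p hp t
  linear_combination (x^6) * K0 + (30*x^4) * K1 + (360*x^2) * K2 + (720:ℝ) * K3
    + (30*x^4) * hx1 + (360*x^2) * hx2 + (720:ℝ) * hx3 + (1:ℝ) * hphi1 + (-1:ℝ) * hphi2

lemma tau_congr {f g : ℝ → ℝ → ℝ} (h : ∀ t > (0:ℝ), ∀ x, f t x = g t x) :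
    ∀ t > (0:ℝ), ∀ x, tauRH2 f t x = tauRH2 g t x := by
  intro t ht x
  rw [tauRH2, tauRH2]
  have ev : (fun s => f s x) =ᶠ[nhds t] (fun s => g s x) := by
    filter_upwards [IsOpen.mem_nhds isOpen_Ioi ht] with s hs
    exact h s hs x
  have e1 : deriv (fun s => f s x) t = deriv (fun s => g s x) t := ev.deriv_eq
  have e2 : deriv (deriv (fun s => f s x)) t = deriv (deriv (fun s => g s x)) t :=
    (Filter.EventuallyEq.deriv ev).deriv_eq
  have e3 : (fun y => f t y) = (fun y => g t y) := funext fun y => h t ht y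
  rw [e1, e2, e3]

lemma tau_iter_congr (k : ℕ) {f g : ℝ → ℝ → ℝ} (h : ∀ t > (0:ℝ), ∀ x, f t x = g t x) :
    ∀ t > (0:ℝ), ∀ x, (tauRH2)^[k] f t x = (tauRH2)^[k] g t x := by
  induction k generalizing f g with
  | zero => simpa using h
  | succ n ih =>
    intro t ht x
    rw [Function.iterate_succ_apply, Function.iterate_succ_apply]
    exact ih (tau_congr h) t ht x

lemma phi_hasX1 (p : ℕ) (t y : ℝ) : HasDerivAt (fun y => phiRH2 p t y)
    (6*y^5 * Real.log t^(p-1) + 120*y^3 * fRH2 1 t p + 720*y * fRH2 2 t p) y := by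
  have h1 := (hasDerivAt_pow 6 y).mul_const (Real.log t ^ (p-1))
  have h2 := ((hasDerivAt_pow 4 y).const_mul (30:ℝ)).mul_const (fRH2 1 t p)
  have h3 := ((hasDerivAt_pow 2 y).const_mul (360:ℝ)).mul_const (fRH2 2 t p)
  have h4 : HasDerivAt (fun _ : ℝ => 720 * fRH2 3 t p) 0 y := hasDerivAt_const y _
  have h := ((h1.fun_add h2).fun_add h3).fun_add h4
  simp only [phiRH2]
  refine h.congr_deriv ?_
  push_cast
  ring

lemma phi_hasX2 (p : ℕ) (t x : ℝ) : HasDerivAt (fun y : ℝ =>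
    6*y^5 * Real.log t^(p-1) + 120*y^3 * fRH2 1 t p + 720*y * fRH2 2 t p)
    (30*x^4 * Real.log t^(p-1) + 360*x^2 * fRH2 1 t p + 720 * fRH2 2 t p) x := by
  have h1 := ((hasDerivAt_pow 5 x).const_mul (6:ℝ)).mul_const (Real.log t ^ (p-1))
  have h2 := ((hasDerivAt_pow 3 x).const_mul (120:ℝ)).mul_const (fRH2 1 t p)
  have h3 := ((hasDerivAt_pow 1 x).const_mul (720:ℝ)).mul_const (fRH2 2 t p)
  have h := (h1.fun_add h2).fun_add h3
  have hfun : (fun y : ℝ => 6*y^5 * Real.log t^(p-1) + 120*y^3 * fRH2 1 t p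
      + 720*y^1 * fRH2 2 t p) = (fun y : ℝ => 6*y^5 * Real.log t^(p-1)
      + 120*y^3 * fRH2 1 t p + 720*y * fRH2 2 t p) := by
    funext y
    ring
  rw [hfun] at h
  refine h.congr_deriv ?_
  push_cast
  ring

noncomputable def PhiC (n : ℕ) (c : ℕ → ℝ) : ℝ → ℝ → ℝ := fun t x =>
  ∑ m ∈ Finset.range n, c m * phiRH2 (m+1) t x

lemma tau_PhiC (n : ℕ) (c : ℕ → ℝ) : ∀ t > (0:ℝ), ∀ x : ℝ,
    tauRH2 (PhiC n c) t x = ∑ m ∈ Finset.range n, c m * tauRH2 (phiRH2 (m+1)) t x := by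
  intro t ht x
  have htt : deriv (deriv (fun s => PhiC n c s x)) t
      = ∑ m ∈ Finset.range n, c m * phiD2RH2 (m+1) x t := by
    have hev : deriv (fun s => PhiC n c s x)
        =ᶠ[nhds t] (fun s => ∑ m ∈ Finset.range n, c m * phiD1RH2 (m+1) x s) := by
      filter_upwards [IsOpen.mem_nhds isOpen_Ioi ht] with s hs
      have h := HasDerivAt.fun_sum (fun m (_ : m ∈ Finset.range n) =>
        (phi_hasD1 (m+1) (by omega) x hs).const_mul (c m))
      exact h.deriv
    rw [hev.deriv_eq]
    exact (HasDerivAt.fun_sum (fun m (_ : m ∈ Finset.range n) =>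
      (phi_hasD2 (m+1) x ht).const_mul (c m))).deriv
  have hxx : deriv (deriv (fun y => PhiC n c t y)) x
      = ∑ m ∈ Finset.range n, c m * (30*x^4 * Real.log t^(m+1-1)
          + 360*x^2 * fRH2 1 t (m+1) + 720 * fRH2 2 t (m+1)) := by
    have he : deriv (fun y => PhiC n c t y) = (fun y => ∑ m ∈ Finset.range n,
        c m * (6*y^5 * Real.log t^(m+1-1) + 120*y^3 * fRH2 1 t (m+1)
          + 720*y * fRH2 2 t (m+1))) := by
      funext y
      exact (HasDerivAt.fun_sum (fun m (_ : m ∈ Finset.range n) =>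
        (phi_hasX1 (m+1) t y).const_mul (c m))).deriv
    rw [he]
    exact (HasDerivAt.fun_sum (fun m (_ : m ∈ Finset.range n) =>
      (phi_hasX2 (m+1) t x).const_mul (c m))).deriv
  rw [tauRH2, htt, hxx]
  have hR : ∀ m ∈ Finset.range n, c m * tauRH2 (phiRH2 (m+1)) t x
      = c m * (t^2 * phiD2RH2 (m+1) x t + t^2 * (30*x^4 * Real.log t^(m+1-1)
          + 360*x^2 * fRH2 1 t (m+1) + 720 * fRH2 2 t (m+1))) := by
    intro m _
    rw [tauRH2, phi_tt (m+1) (by omega) x ht, phi_xx (m+1) t x]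
    ring
  rw [Finset.sum_congr rfl hR]
  have hmid : (1 - (1:ℝ)) * t * deriv (fun s => PhiC n c s x) t = 0 := by ring
  rw [hmid, add_zero, Finset.mul_sum, Finset.mul_sum, ← Finset.sum_add_distrib]
  refine Finset.sum_congr rfl fun m _ => ?_
  ring

lemma shift1RH2 (n : ℕ) (h : ℕ → ℝ) (h0 : h 0 = 0) (hn : h n = 0) :
    ∑ m ∈ Finset.range n, h (m+1) = ∑ m ∈ Finset.range n, h m := by
  have e1 : ∑ m ∈ Finset.range (n+1), h m = ∑ m ∈ Finset.range n, h (m+1) + h 0 :=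
    Finset.sum_range_succ' h n
  have e2 : ∑ m ∈ Finset.range (n+1), h m = ∑ m ∈ Finset.range n, h m + h n :=
    Finset.sum_range_succ h n
  rw [h0, add_zero] at e1
  rw [hn, add_zero] at e2
  rw [← e1, e2]

noncomputable def stepcRH2 (c : ℕ → ℝ) : ℕ → ℝ := fun m =>
  -(((m+1:ℕ)):ℝ) * c (m+1) + ((m+1:ℕ):ℝ) * ((m+2:ℕ):ℝ) * c (m+2)

lemma tau_step (n : ℕ) (c : ℕ → ℝ) (hc : ∀ m, n ≤ m → c m = 0) :
    ∀ t > (0:ℝ), ∀ x : ℝ, tauRH2 (PhiC n c) t x = PhiC n (stepcRH2 c) t x := by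
  intro t ht x
  rw [tau_PhiC n c t ht x]
  have hR : ∀ m ∈ Finset.range n, c m * tauRH2 (phiRH2 (m+1)) t x
      = (-(m:ℝ) * c m * phiRH2 m t x)
        + ((m:ℝ) * ((m:ℝ)-1) * c m * phiRH2 (m-1) t x) := by
    intro m _
    rw [part1 (m+1) (by omega) t ht x]
    push_cast
    ring
  rw [Finset.sum_congr rfl hR, Finset.sum_add_distrib]
  have hH1 : ∑ m ∈ Finset.range n, (-(m:ℝ) * c m * phiRH2 m t x)
      = ∑ m ∈ Finset.range n, (-((m+1:ℕ):ℝ) * c (m+1) * phiRH2 (m+1) t x) := by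
    rw [shift1RH2 n (fun m => -(m:ℝ) * c m * phiRH2 m t x) (by norm_num)
      (by show -(n:ℝ) * c n * phiRH2 n t x = 0; rw [hc n le_rfl]; ring)]
  have hH2 : ∑ m ∈ Finset.range n, ((m:ℝ) * ((m:ℝ)-1) * c m * phiRH2 (m-1) t x)
      = ∑ m ∈ Finset.range n, (((m+2:ℕ):ℝ) * (((m+2:ℕ):ℝ)-1) * c (m+2) * phiRH2 (m+2-1) t x) := by
    rw [show (fun m => (((m+2:ℕ):ℝ) * (((m+2:ℕ):ℝ)-1) * c (m+2) * phiRH2 (m+2-1) t x))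
        = fun m => ((fun m' => ((m':ℕ):ℝ) * (((m':ℕ):ℝ)-1) * c m' * phiRH2 (m'-1) t x) (m+1+1)) from rfl]
    rw [shift1RH2 n (fun m => (fun m' => ((m':ℕ):ℝ) * (((m':ℕ):ℝ)-1) * c m' * phiRH2 (m'-1) t x) (m+1))
      (by show ((0+1:ℕ):ℝ) * (((0+1:ℕ):ℝ)-1) * c (0+1) * phiRH2 (0+1-1) t x = 0; norm_num)
      (by show ((n+1:ℕ):ℝ) * (((n+1:ℕ):ℝ)-1) * c (n+1) * phiRH2 (n+1-1) t x = 0; rw [hc (n+1) (by omega)]; ring)]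
    rw [shift1RH2 n (fun m' => ((m':ℕ):ℝ) * (((m':ℕ):ℝ)-1) * c m' * phiRH2 (m'-1) t x)
      (by norm_num) (by show (n:ℝ) * ((n:ℝ)-1) * c n * phiRH2 (n-1) t x = 0; rw [hc n le_rfl]; ring)]
  rw [hH1, hH2, ← Finset.sum_add_distrib, PhiC]
  refine Finset.sum_congr rfl fun m _ => ?_
  rw [stepcRH2]
  have e1 : m + 2 - 1 = m + 1 := rfl
  rw [e1]
  push_cast
  ring

lemma iterC (k n : ℕ) (c : ℕ → ℝ) (hc : ∀ m, n ≤ m → c m = 0) :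
    ∀ t > (0:ℝ), ∀ x : ℝ, (tauRH2)^[k] (PhiC n c) t x = PhiC n (stepcRH2^[k] c) t x := by
  induction k generalizing c with
  | zero => intro t ht x; rfl
  | succ K ih =>
    intro t ht x
    rw [Function.iterate_succ_apply, Function.iterate_succ_apply]
    have h2 := tau_iter_congr K (tau_step n c hc) t ht x
    rw [h2]
    have hc' : ∀ m, n ≤ m → stepcRH2 c m = 0 := by
      intro m hm
      show -(((m+1:ℕ)):ℝ) * c (m+1) + ((m+1:ℕ):ℝ) * ((m+2:ℕ):ℝ) * c (m+2) = 0
      rw [hc (m+1) (by omega), hc (m+2) (by omega)]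
      ring
    exact ih (stepcRH2 c) hc' t ht x

lemma step_support (p : ℕ) (hp : 1 ≤ p) (δ : ℕ → ℝ) (hδ : ∀ m, p - 1 ≠ m → δ m = 0) :
    ∀ k m, p ≤ m + k → stepcRH2^[k] δ m = 0 := by
  intro k
  induction k with
  | zero =>
    intro m hm
    exact hδ m (by omega)
  | succ K ih =>
    intro m hm
    rw [Function.iterate_succ_apply']
    show -(((m+1:ℕ)):ℝ) * (stepcRH2^[K] δ) (m+1) + ((m+1:ℕ):ℝ) * ((m+2:ℕ):ℝ) * (stepcRH2^[K] δ) (m+2) = 0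
    rw [ih (m+1) (by omega), ih (m+2) (by omega)]
    ring

theorem part2 (p : ℕ) (hp : 1 ≤ p) :
    ∀ t > (0 : ℝ), ∀ x : ℝ, (tauRH2)^[p] (phiRH2 p) t x = 0 := by
  intro t ht x
  have hδ : ∀ m, p ≤ m → (fun m => if p - 1 = m then (1:ℝ) else 0) m = 0 :=
    fun m hm => if_neg (by omega)
  have hphi : ∀ t' > (0:ℝ), ∀ x' : ℝ, phiRH2 p t' x'
      = PhiC p (fun m => if p - 1 = m then (1:ℝ) else 0) t' x' := by
    intro t' _ x'
    rw [PhiC]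
    simp only [ite_mul, one_mul, zero_mul]
    rw [Finset.sum_ite_eq (Finset.range p) (p-1) (fun m => phiRH2 (m+1) t' x')]
    rw [if_pos (Finset.mem_range.mpr (by omega))]
    rw [Nat.sub_add_cancel hp]
  rw [tau_iter_congr p hphi t ht x]
  rw [iterC p p _ hδ t ht x, PhiC]
  have h0 : ∀ m ∈ Finset.range p,
      (stepcRH2^[p] (fun m => if p - 1 = m then (1:ℝ) else 0)) m * phiRH2 (m+1) t x = 0 := by
    intro m _
    rw [step_support p hp _ (fun m' hm' => if_neg hm') p m (by omega)]
    ring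
  rw [Finset.sum_congr rfl h0, Finset.sum_const_zero]

/-- the recursion `τ(φ_p) = −(p−1)·φ_{p−1} + (p−1)(p−2)·φ_{p−2}`, and
consequently `τ^p(φ_p) = 0`. -/
theorem stmt_6 (p : ℕ) (hp : 1 ≤ p) :
    (∀ t > (0 : ℝ), ∀ x : ℝ,
        tauRH2 (phiRH2 p) t x
          = -((p : ℝ) - 1) * phiRH2 (p - 1) t x
            + ((p : ℝ) - 1) * ((p : ℝ) - 2) * phiRH2 (p - 2) t x) ∧
      (∀ t > (0 : ℝ), ∀ x : ℝ, (tauRH2)^[p] (phiRH2 p) t x = 0) := by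
  exact ⟨part1 p hp, part2 p hp⟩
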